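/- arXiv:1007.4028 — 8 statements merged into one kernel-verified Lean document; each statement's English description precedes it below -/
import Mathlib

section
/- Let G be a ground program with an EDB/IDB partition and Q an IDB query atom. Let M be a model of Magic(Q,G) and let N ⊆ M be a model of the reduct Magic(Q,G)^M. Then the set of killed atoms killed(M,N) is an unfounded set for G with respect to the interpretation {a ∈ A : (left copy of) a ∈ M}. -/
/-- A ground ASP rule over a type `A` of ground atoms: a finite nonempty head,
a finite positive body and a finite negative body. -/
structure GroundRule (A : Type) : Type where
  head : Set A
  pos : Set A
  neg : Set A
  head_fin : head.Finite
  pos_fin : pos.Finite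
  neg_fin : neg.Finite
  head_ne : head.Nonempty

/-- An interpretation `I` satisfies a ground rule. -/
def GroundRule.satisfiedBy {A : Type} (I : Set A) (r : GroundRule A) : Prop :=
  r.pos ⊆ I ∧ r.neg ∩ I = ∅ → (r.head ∩ I).Nonempty

/-- `I` is a model of the ground program `G`. -/
def isModel {A : Type} (I : Set A) (G : Set (GroundRule A)) : Prop :=
  ∀ r ∈ G, r.satisfiedBy I

/-- The rule obtained by deleting the negative body. -/
def GroundRule.reduce {A : Type} (r : GroundRule A) : GroundRule A :=
  ⟨r.head, r.pos, ∅, r.head_fin, r.pos_fin, Set.finite_empty, r.head_ne⟩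

/-- The reduct `G^I`. -/
def reduct {A : Type} (G : Set (GroundRule A)) (I : Set A) : Set (GroundRule A) :=
  {g | ∃ r ∈ G, r.neg ∩ I = ∅ ∧ g = r.reduce}

/-- `M` is a stable model of `G`: a ⊆-minimal model of the reduct `G^M`. -/
def isStableModel {A : Type} (G : Set (GroundRule A)) (M : Set A) : Prop :=
  isModel M (reduct G M) ∧ ∀ N ⊆ M, isModel N (reduct G M) → N = M

/-- Brave entailment: `Q` is in some stable model. -/
def braveEnt {A : Type} (G : Set (GroundRule A)) (Q : A) : Prop :=
  ∃ M, isStableModel G M ∧ Q ∈ M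

/-- Cautious entailment: `Q` is in every stable model. -/
def cautiousEnt {A : Type} (G : Set (GroundRule A)) (Q : A) : Prop :=
  ∀ M, isStableModel G M → Q ∈ M

/-- `X` is an unfounded set for `G` w.r.t. `I`. -/
def isUnfounded {A : Type} (G : Set (GroundRule A)) (I X : Set A) : Prop :=
  ∀ r ∈ G, (r.head ∩ X).Nonempty →
    ¬ r.pos ⊆ I ∨ (r.neg ∩ I).Nonempty ∨ (r.pos ∩ X).Nonempty ∨
      (r.head ∩ (I \ X)).Nonempty

/-- `G` is stratified: it admits a level mapping. -/
def isStratified {A : Type} (G : Set (GroundRule A)) : Prop :=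
  ∃ lv : A → ℕ, ∀ r ∈ G, ∀ h ∈ r.head,
    (∀ b ∈ r.pos, lv b ≤ lv h) ∧ (∀ b ∈ r.neg, lv b < lv h)

/-- The set `R(Q,G)` of atoms relevant for `Q` in `G` (the least set containing `Q`
and closed under rules whose head intersects it). -/
def relevantFor {A : Type} (G : Set (GroundRule A)) (Q : A) : Set A :=
  ⋂₀ {R : Set A | Q ∈ R ∧ ∀ r ∈ G, (r.head ∩ R).Nonempty → r.head ∪ r.pos ∪ r.neg ⊆ R}

/-- `Q` is finitely recursive on `G`. -/
def finitelyRecursive {A : Type} (G : Set (GroundRule A)) (Q : A) : Prop :=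
  (relevantFor G Q).Finite

/-- A fact: a singleton head and empty bodies. -/
def GroundRule.isFact {A : Type} (r : GroundRule A) : Prop :=
  (∃ a, r.head = {a}) ∧ r.pos = ∅ ∧ r.neg = ∅

/-- The fact with head `{a}`. -/
def factRule {A : Type} (a : A) : GroundRule A :=
  ⟨{a}, ∅, ∅, Set.finite_singleton a, Set.finite_empty, Set.finite_empty,
    Set.singleton_nonempty a⟩

/-- An EDB/IDB partition of a ground program: `idb` and `edb` are disjoint and
every rule of `edb` is a fact. -/
def isPartition {A : Type} (idb edb : Set (GroundRule A)) : Prop :=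
  Disjoint idb edb ∧ ∀ r ∈ edb, r.isFact

/-- `a` is an IDB atom: it occurs in the head of some IDB rule. -/
def isIDBAtom {A : Type} (idb : Set (GroundRule A)) (a : A) : Prop :=
  ∃ r ∈ idb, a ∈ r.head
/-- The magic rule `m(q) :- m(p)` (magic atoms live in the right copy of `A ⊕ A`). -/
def magicRule {A : Type} (q p : A) : GroundRule (A ⊕ A) :=
  ⟨{Sum.inr q}, {Sum.inr p}, ∅, Set.finite_singleton _, Set.finite_singleton _,
    Set.finite_empty, Set.singleton_nonempty _⟩

/-- The modified rule obtained from `r`: the head (left copies), the positive body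
augmented with the magic atoms of all head atoms, and the negative body. -/
def modifiedRule {A : Type} (r : GroundRule A) : GroundRule (A ⊕ A) :=
  ⟨Sum.inl '' r.head, Sum.inl '' r.pos ∪ Sum.inr '' r.head, Sum.inl '' r.neg,
    r.head_fin.image _, (r.pos_fin.image _).union (r.head_fin.image _),
    r.neg_fin.image _, r.head_ne.image _⟩

/-- Renaming the atoms of a rule along a function. -/
def GroundRule.map {A B : Type} (f : A → B) (r : GroundRule A) : GroundRule B :=
  ⟨f '' r.head, f '' r.pos, f '' r.neg, r.head_fin.image _, r.pos_fin.image _,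
    r.neg_fin.image _, r.head_ne.image _⟩

/-- The magic subprogram: the seed fact `m(Q).` together with all magic rules. -/
def magicSub {A : Type} (idb : Set (GroundRule A)) (Q : A) : Set (GroundRule (A ⊕ A)) :=
  {factRule (Sum.inr Q)} ∪
    {g | ∃ r ∈ idb, ∃ p ∈ r.head, ∃ q ∈ (r.head ∪ r.pos ∪ r.neg) \ {p},
      isIDBAtom idb q ∧ g = magicRule q p}

/-- The magic transform `Magic(Q,G)` of the program `G = idb ∪ edb`:
the seed fact, the magic rules, the modified rules and the EDB facts. -/
def magicProg {A : Type} (idb edb : Set (GroundRule A)) (Q : A) :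
    Set (GroundRule (A ⊕ A)) :=
  magicSub idb Q ∪ {g | ∃ r ∈ idb, g = modifiedRule r} ∪ GroundRule.map Sum.inl '' edb

/-- The least model of a program (the intersection of all its models);
for a definite program this is its least model. -/
def leastModel {A : Type} (G : Set (GroundRule A)) : Set A :=
  ⋂₀ {I | isModel I G}

/-- `M*`: the least model of the magic subprogram. -/
def Mstar {A : Type} (idb : Set (GroundRule A)) (Q : A) : Set (A ⊕ A) :=
  leastModel (magicSub idb Q)

/-- The killed atoms w.r.t. `N`: atoms (of the left copy) that are false in `N` and
are EDB atoms or whose magic atom is true in `N`. -/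
def killed {A : Type} (idb : Set (GroundRule A)) (N : Set (A ⊕ A)) : Set A :=
  {a | Sum.inl a ∉ N ∧ (¬ isIDBAtom idb a ∨ Sum.inr a ∈ N)}

/-- The magic variant of an interpretation `I`: the heads of the EDB facts,
`M*`, and the left copies of the atoms of `I` whose magic atom is in `M*`. -/
def magicVariant {A : Type} (idb edb : Set (GroundRule A)) (Q : A) (I : Set A) :
    Set (A ⊕ A) :=
  (⋃ r ∈ edb, Sum.inl '' r.head) ∪ Mstar idb Q ∪
    {x | ∃ a ∈ I, Sum.inr a ∈ Mstar idb Q ∧ x = Sum.inl a}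


lemma reduct_sat {A : Type} {G : Set (GroundRule A)} {M N : Set A}
    (hN : isModel N (reduct G M)) {r : GroundRule A} (hr : r ∈ G)
    (hneg : r.neg ∩ M = ∅) (hpos : r.pos ⊆ N) : (r.head ∩ N).Nonempty := by
  have h := hN r.reduce ⟨r, hr, hneg, rfl⟩
  exact h ⟨hpos, by simp [GroundRule.reduce]⟩

/-- Killed atoms form an unfounded set: if `M` is a model of `Magic(Q,G)` and
`N ⊆ M` is a model of the reduct `Magic(Q,G)^M`, then `killed(M,N)` is an unfounded
set for `G = idb ∪ edb` w.r.t. the restriction of `M` to the left copy. -/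
theorem killed_isUnfounded {A : Type} (idb edb : Set (GroundRule A)) (Q : A)
    (hpart : isPartition idb edb) (hQ : isIDBAtom idb Q)
    (M N : Set (A ⊕ A))
    (hM : isModel M (magicProg idb edb Q))
    (hNM : N ⊆ M)
    (hN : isModel N (reduct (magicProg idb edb Q) M)) :
    isUnfounded (idb ∪ edb) {a | Sum.inl a ∈ M} (killed idb N) := by
  intro r hr hheadX
  obtain ⟨p, hpH, hpK⟩ := hheadX
  by_contra hcon
  push_neg at hcon
  obtain ⟨hposI, hnegI, hposX, hhx⟩ := hcon
  cases hr with
  | inr hredb =>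
    -- r is an EDB fact
    obtain ⟨⟨a, hha⟩, hp0, hn0⟩ := hpart.2 r hredb
    have hmem : r.map Sum.inl ∈ magicProg idb edb Q := Or.inr ⟨r, hredb, rfl⟩
    have hsat := reduct_sat hN hmem (by simp [GroundRule.map, hn0])
      (by simp [GroundRule.map, hp0])
    obtain ⟨x, hx1, hx2⟩ := hsat
    obtain ⟨b, hb, rfl⟩ := hx1
    rw [hha] at hpH hb
    rw [Set.mem_singleton_iff] at hpH hb
    subst hpH; subst hb
    exact hpK.1 hx2
  | inl hridb =>
    have hpIDB : isIDBAtom idb p := ⟨r, hridb, hpH⟩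
    have hpm : Sum.inr p ∈ N := by
      rcases hpK.2 with h | h
      · exact absurd hpIDB h
      · exact h
    -- magic rules propagate
    have hmagic : ∀ q ∈ r.head ∪ r.pos ∪ r.neg, q ≠ p → isIDBAtom idb q →
        Sum.inr q ∈ N := by
      intro q hq hqp hqidb
      have hmem : magicRule q p ∈ magicProg idb edb Q :=
        Or.inl (Or.inl (Or.inr ⟨r, hridb, p, hpH, q, ⟨hq, hqp⟩, hqidb, rfl⟩))
      have hsat := reduct_sat hN hmem (by simp [magicRule])
        (by simp [magicRule]; exact hpm)
      obtain ⟨x, hx1, hx2⟩ := hsat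
      simp only [magicRule, Set.mem_singleton_iff] at hx1
      subst hx1; exact hx2
    -- modified rule
    have hmem : modifiedRule r ∈ magicProg idb edb Q :=
      Or.inl (Or.inr ⟨r, hridb, rfl⟩)
    have hnegM : (modifiedRule r).neg ∩ M = ∅ := by
      rw [Set.eq_empty_iff_forall_notMem]
      rintro x ⟨⟨b, hb, rfl⟩, hbM⟩
      have : b ∈ r.neg ∩ {a | Sum.inl a ∈ M} := ⟨hb, hbM⟩
      rw [hnegI] at this; exact this
    have hposN : (modifiedRule r).pos ⊆ N := by
      rintro x (⟨b, hb, rfl⟩ | ⟨h, hh, rfl⟩)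
      · -- b ∈ r.pos
        have hbK : b ∉ killed idb N := fun hbK => by
          have : b ∈ r.pos ∩ killed idb N := ⟨hb, hbK⟩
          rw [hposX] at this; exact this
        by_contra hbN
        have hbIDB : isIDBAtom idb b ∧ Sum.inr b ∉ N := by
          by_contra hc
          push_neg at hc
          rcases Classical.em (isIDBAtom idb b) with hi | hi
          · exact hbK ⟨hbN, Or.inr (hc hi)⟩
          · exact hbK ⟨hbN, Or.inl hi⟩
        have hbp : b ≠ p := fun h => by subst h; exact hbK hpK
        exact hbIDB.2 (hmagic b (Or.inl (Or.inr hb)) hbp hbIDB.1)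
      · -- h ∈ r.head
        rcases Classical.em (h = p) with rfl | hhp
        · exact hpm
        · exact hmagic h (Or.inl (Or.inl hh)) hhp ⟨r, hridb, hh⟩
    have hsat := reduct_sat hN hmem hnegM hposN
    obtain ⟨x, hx1, hx2⟩ := hsat
    obtain ⟨h, hh, rfl⟩ := hx1
    have hhI : h ∈ {a | Sum.inl a ∈ M} := hNM hx2
    have hhK : h ∈ killed idb N := by
      by_contra hk
      have : h ∈ r.head ∩ ({a | Sum.inl a ∈ M} \ killed idb N) := ⟨hh, hhI, hk⟩
      rw [hhx] at this; exact this
    exact hhK.1 hx2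
end

section
/- Let G be a stratified ground program with an EDB/IDB partition, and let Q be an IDB query atom that is finitely recursive on G. Then for every stable model M' of Magic(Q,G) there exists a stable model M of G such that {a ∈ A : (left copy of) a ∈ M'} ⊆ M and Q ∈ M if and only if (the left copy of) Q ∈ M'. -/
/-!
Split `G` along the atoms that `M'` already decides: those whose magic atom is true in `M'`, the
EDB atoms, and those true in `M'`. The IDB rules with a true magic head atom, together with the
EDB facts, only mention such atoms, and the left part `L` of `M'` is a stable model of them, since
any smaller model would lift to a smaller model of the reduct of `Magic(Q,G)`. Every other IDB
rule can only derive atoms of the splitting set that are already in `L`. Adding `L` as facts to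
these remaining rules gives a stratified program, which has a stable model `W` (built level by
level, taking a minimal model at each level by Zorn's lemma); by the splitting set theorem `W` is
a stable model of `G` that agrees with `L` on the splitting set, and `Q` lies in the splitting
set because `m(Q)` is the seed.
-/

open Set

section GroundPrograms

variable {A : Type} {G : Set (GroundRule A)}

lemma isModel_reduct_iff {M N : Set A} :
    isModel N (reduct G M) ↔ ∀ r ∈ G, r.neg ∩ M = ∅ → r.pos ⊆ N → (r.head ∩ N).Nonempty := by
  constructor
  · exact fun h r hr hneg hpos => h r.reduce ⟨r, hr, hneg, rfl⟩ ⟨hpos, empty_inter N⟩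
  · rintro h _ ⟨r, hr, hneg, rfl⟩ ⟨hpos, -⟩
    exact h r hr hneg hpos

lemma isModel_reduct_of_isModel {M : Set A} (hM : isModel M G) : isModel M (reduct G M) :=
  isModel_reduct_iff.2 fun r hr hneg hpos => hM r hr ⟨hpos, hneg⟩

lemma mem_of_isModel_reduct {M N : Set A} (hN : isModel N (reduct G M)) {r : GroundRule A}
    (hr : r ∈ G) {a : A} (hhead : r.head = {a}) (hneg : r.neg = ∅) (hpos : r.pos ⊆ N) :
    a ∈ N := by
  obtain ⟨b, hb, hbN⟩ := isModel_reduct_iff.1 hN r hr (by simp [hneg]) hpos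
  rw [hhead, mem_singleton_iff] at hb
  exact hb ▸ hbN

lemma isStableModel.subset_biUnion_head {M : Set A} (hM : isStableModel G M) :
    M ⊆ ⋃ r ∈ G, r.head := by
  have hsupp : isModel (M ∩ ⋃ r ∈ G, r.head) (reduct G M) := by
    refine isModel_reduct_iff.2 fun r hr hneg hpos => ?_
    obtain ⟨h, hh, hhM⟩ := isModel_reduct_iff.1 hM.1 r hr hneg (hpos.trans inter_subset_left)
    exact ⟨h, hh, hhM, mem_biUnion hr hh⟩
  rw [← hM.2 _ inter_subset_left hsupp]
  exact inter_subset_right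

lemma IsChain.exists_inter_subset_sInter {α : Type*} {c : Set (Set α)}
    (hc : IsChain (· ⊆ ·) c) (hne : c.Nonempty) {s : Set α} (hs : s.Finite) :
    ∃ Y ∈ c, s ∩ Y ⊆ ⋂₀ c := by
  have hdir : DirectedOn (· ⊆ ·) (compl '' c) :=
    (hc.symm.image_of_map_rel _ _ compl fun _ _ h => compl_subset_compl.2 h).directedOn
  obtain ⟨_, ⟨Y, hY, rfl⟩, hsub⟩ :=
    hdir.exists_mem_subset_of_finite_of_subset_sUnion (hne.image compl) (hs.sdiff (t := ⋂₀ c))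
      (by rw [← compl_sInter]; exact sdiff_subset_compl _ _)
  exact ⟨Y, hY, fun a ha => by_contra fun h => hsub ⟨ha.1, h⟩ ha.2⟩

/-- Finite bodies and heads let a nonempty chain of models decide each rule at one member. -/
lemma isModel_sInter {c : Set (Set A)} (hc : IsChain (· ⊆ ·) c) (hne : c.Nonempty)
    (hmod : ∀ I ∈ c, isModel I G) : isModel (⋂₀ c) G := by
  rintro r hr ⟨hpos, hneg⟩
  obtain ⟨Y₁, hY₁, hY₁sub⟩ := hc.exists_inter_subset_sInter hne r.neg_fin
  have hnegY₁ : r.neg ∩ Y₁ = ∅ :=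
    subset_empty_iff.1 (hneg ▸ subset_inter inter_subset_left hY₁sub)
  have hmeet : ∀ Y ∈ c, (r.head ∩ Y).Nonempty := by
    intro Y hY
    rcases hc.total hY hY₁ with hle | hle
    · exact hmod Y hY r hr ⟨hpos.trans (sInter_subset_of_mem hY),
        subset_empty_iff.1 (hnegY₁ ▸ inter_subset_inter_right _ hle)⟩
    · exact (hmod Y₁ hY₁ r hr ⟨hpos.trans (sInter_subset_of_mem hY₁), hnegY₁⟩).mono
        (inter_subset_inter_right _ hle)
  obtain ⟨Y₂, hY₂, hY₂sub⟩ := hc.exists_inter_subset_sInter hne r.head_fin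
  obtain ⟨h, hh⟩ := hmeet Y₂ hY₂
  exact ⟨h, hh.1, hY₂sub hh⟩

end GroundPrograms

section Stratification

variable {A : Type} {G : Set (GroundRule A)} {lv : A → ℕ}

def IsLevelMapping (G : Set (GroundRule A)) (lv : A → ℕ) : Prop :=
  ∀ r ∈ G, ∀ h ∈ r.head, (∀ b ∈ r.pos, lv b ≤ lv h) ∧ (∀ b ∈ r.neg, lv b < lv h)

def truncate (lv : A → ℕ) (n : ℕ) (J : Set A) : Set A :=
  {a | lv a ≤ n → a ∈ J}

def IsLevelMinimal (G : Set (GroundRule A)) (lv : A → ℕ) (n : ℕ) (M : Set A) : Prop :=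
  ∀ J, isModel J G → (∀ a, lv a < n → (a ∈ J ↔ a ∈ M)) → (∀ a, lv a = n → a ∈ J → a ∈ M) →
    ∀ a, lv a = n → a ∈ M → a ∈ J

lemma IsLevelMapping.mono {G' : Set (GroundRule A)} (hG : IsLevelMapping G lv) (h : G' ⊆ G) :
    IsLevelMapping G' lv :=
  fun r hr => hG r (h hr)

lemma IsLevelMapping.factRule_image_union (hG : IsLevelMapping G lv) (S : Set A) :
    IsLevelMapping (factRule '' S ∪ G) lv := by
  rintro r (⟨a, -, rfl⟩ | hr)
  · simp [factRule]
  · exact hG r hr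

/-- Rules with a head above level `n` are satisfied by the truncation; the others only see
atoms up to level `n`, where the truncation is `J`. -/
lemma IsLevelMapping.isModel_truncate (hG : IsLevelMapping G lv) {J M : Set A} {n : ℕ}
    (hJ : isModel J (reduct G M)) (hMJ : ∀ a, lv a < n → a ∈ M → a ∈ J) :
    isModel (truncate lv n J) G := by
  rintro r hr ⟨hpos, hneg⟩
  by_cases hhigh : ∃ h ∈ r.head, n < lv h
  · obtain ⟨h, hh, hlt⟩ := hhigh
    exact ⟨h, hh, fun hle => absurd hle (not_le.2 hlt)⟩
  push Not at hhigh
  obtain ⟨h₀, hh₀⟩ := r.head_ne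
  have hnegM : r.neg ∩ M = ∅ := by
    refine subset_empty_iff.1 fun b ⟨hb, hbM⟩ => ?_
    have hbn : lv b < n := ((hG r hr h₀ hh₀).2 b hb).trans_le (hhigh h₀ hh₀)
    exact hneg.subset ⟨hb, fun _ => hMJ b hbn hbM⟩
  have hposJ : r.pos ⊆ J := fun b hb =>
    hpos hb (((hG r hr h₀ hh₀).1 b hb).trans (hhigh h₀ hh₀))
  obtain ⟨h, hh, hhJ⟩ := isModel_reduct_iff.1 hJ r hr hnegM hposJ
  exact ⟨h, hh, fun _ => hhJ⟩

lemma IsLevelMinimal.congr {n : ℕ} {M M' : Set A} (hM : IsLevelMinimal G lv n M)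
    (hMM' : ∀ a, lv a ≤ n → (a ∈ M ↔ a ∈ M')) : IsLevelMinimal G lv n M' := by
  intro J hJ hbelow hlevel a ha haM'
  refine hM J hJ (fun b hb => (hbelow b hb).trans (hMM' b hb.le).symm)
    (fun b hb hbJ => (hMM' b hb.le).2 (hlevel b hb hbJ)) a ha ((hMM' a ha.le).2 haM')

/-- Zorn's lemma on the models that agree with `I` below level `n` and contain every atom above
it. -/
lemma IsLevelMapping.exists_isLevelMinimal (hG : IsLevelMapping G lv) {I : Set A}
    (hI : isModel I G) (n : ℕ) :
    ∃ J, isModel J G ∧ (∀ a, lv a < n → (a ∈ J ↔ a ∈ I)) ∧ IsLevelMinimal G lv n J := by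
  set S : Set (Set A) :=
    {J | isModel J G ∧ (∀ a, lv a < n → (a ∈ J ↔ a ∈ I)) ∧ ∀ a, n < lv a → a ∈ J}
  have htrunc : ∀ J, isModel J G → (∀ a, lv a < n → (a ∈ J ↔ a ∈ I)) → truncate lv n J ∈ S :=
    fun J hJ hJI => ⟨hG.isModel_truncate (isModel_reduct_of_isModel hJ) fun _ _ => id,
      fun a ha => ⟨fun h => (hJI a ha).1 (h ha.le), fun h _ => (hJI a ha).2 h⟩,
      fun a ha hle => absurd hle (not_le.2 ha)⟩
  have hchain : ∀ c ⊆ S, IsChain (· ⊆ ·) c → c.Nonempty → ⋂₀ c ∈ S := by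
    intro c hcS hc hne
    refine ⟨isModel_sInter hc hne fun Y hY => (hcS hY).1,
      fun a ha => ⟨fun h => ?_, fun h Y hY => ?_⟩, fun a ha Y hY => (hcS hY).2.2 a ha⟩
    · exact ((hcS hne.some_mem).2.1 a ha).1 (h _ hne.some_mem)
    · exact ((hcS hY).2.1 a ha).2 h
  obtain ⟨J, -, hJmin⟩ := zorn_superset_nonempty S
    (fun c hcS hc hne => ⟨⋂₀ c, hchain c hcS hc hne, fun _ => sInter_subset_of_mem⟩)
    _ (htrunc I hI fun _ _ => Iff.rfl)
  obtain ⟨hJ, hJI, hJhigh⟩ := hJmin.prop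
  refine ⟨J, hJ, hJI, fun J' hJ' hbelow hlevel a ha haJ => ?_⟩
  have hK := htrunc J' hJ' fun b hb => (hbelow b hb).trans (hJI b hb)
  have hKJ : truncate lv n J' ⊆ J := by
    intro b hb
    rcases lt_trichotomy (lv b) n with hlt | heq | hgt
    · exact (hbelow b hlt).1 (hb hlt.le)
    · exact hlevel b heq (hb heq.le)
    · exact hJhigh b hgt
  exact (hJmin.eq_of_subset hK hKJ ▸ haJ : a ∈ truncate lv n J') ha.le

/-- Induction on levels: below level `n` a submodel `N` of the reduct agrees with `M`, so the
truncation of `N` competes with `M` at level `n`. -/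
lemma IsLevelMapping.isStableModel_of_isLevelMinimal (hG : IsLevelMapping G lv) {M : Set A}
    (hM : isModel M G) (hmin : ∀ n, IsLevelMinimal G lv n M) : isStableModel G M := by
  refine ⟨isModel_reduct_of_isModel hM, fun N hNM hN => subset_antisymm hNM ?_⟩
  suffices h : ∀ n, ∀ a, lv a < n → a ∈ M → a ∈ N from fun a ha => h _ a (lt_add_one _) ha
  intro n
  induction n with
  | zero => exact fun a ha => absurd ha (Nat.not_lt_zero _)
  | succ n ih =>
    have hlevel := hmin n _ (hG.isModel_truncate hN ih)
      (fun a ha => ⟨fun h => hNM (h ha.le), fun h _ => ih a ha h⟩)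
      (fun a ha h => hNM (h ha.le))
    intro a ha haM
    rcases Nat.lt_succ_iff_lt_or_eq.1 ha with hlt | heq
    · exact ih a hlt haM
    · exact hlevel a heq haM heq.le

lemma IsLevelMapping.isModel_of_agree (hG : IsLevelMapping G lv) {I : ℕ → Set A}
    (hI : ∀ n, isModel (I n) G) {M : Set A} (hM : ∀ n a, lv a < n → (a ∈ M ↔ a ∈ I n)) :
    isModel M G := by
  rintro r hr ⟨hpos, hneg⟩
  obtain ⟨h₀, hh₀⟩ := r.head_ne
  obtain ⟨N, hN⟩ := (r.head_fin.image lv).bddAbove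
  have hhead : ∀ h ∈ r.head, lv h < N + 1 := fun h hh => Nat.lt_succ_of_le (hN ⟨h, hh, rfl⟩)
  have hrule := hG r hr h₀ hh₀
  obtain ⟨h, hh, hhI⟩ := hI (N + 1) r hr
    ⟨fun b hb => (hM _ b ((hrule.1 b hb).trans_lt (hhead h₀ hh₀))).1 (hpos hb),
      subset_empty_iff.1 fun b ⟨hb, hbI⟩ => hneg.subset
        ⟨hb, (hM _ b ((hrule.2 b hb).trans (hhead h₀ hh₀))).2 hbI⟩⟩
  exact ⟨h, hh, (hM _ h (hhead h hh)).2 hhI⟩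

/-- Choose level-minimal models level by level; each step keeps all lower levels, so the
sequence converges levelwise. -/
lemma IsLevelMapping.exists_isModel_isLevelMinimal (hG : IsLevelMapping G lv) :
    ∃ M, isModel M G ∧ ∀ n, IsLevelMinimal G lv n M := by
  choose! step hstep_model hstep_agree hstep_min using
    fun (I : Set A) (hI : isModel I G) n => hG.exists_isLevelMinimal hI n
  let I : ℕ → Set A := fun n => Nat.rec univ (fun k J => step J k) n
  have hI : ∀ n, isModel (I n) G := by
    intro n
    induction n with
    | zero => exact fun r _ _ => by simpa [I] using r.head_ne
    | succ n ih => exact hstep_model _ ih n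
  have hstable : ∀ k m, k ≤ m → ∀ a, lv a < k → (a ∈ I m ↔ a ∈ I k) := by
    intro k m hkm
    induction m, hkm using Nat.le_induction with
    | base => exact fun _ _ => Iff.rfl
    | succ m hkm ih =>
      exact fun a ha => (hstep_agree _ (hI m) m a (ha.trans_le hkm)).trans (ih a ha)
  let M : Set A := {a | a ∈ I (lv a + 1)}
  have hM : ∀ n a, lv a < n → (a ∈ M ↔ a ∈ I n) :=
    fun n a ha => (hstable _ n ha _ (lt_add_one _)).symm
  exact ⟨M, hG.isModel_of_agree hI hM, fun n =>
    (hstep_min _ (hI n) n).congr fun a ha => (hM (n + 1) a (Nat.lt_succ_of_le ha)).symm⟩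

lemma IsLevelMapping.exists_isStableModel (hG : IsLevelMapping G lv) : ∃ M, isStableModel G M :=
  let ⟨M, hM, hmin⟩ := hG.exists_isModel_isLevelMinimal
  ⟨M, hG.isStableModel_of_isLevelMinimal hM hmin⟩

end Stratification

section Splitting

variable {A : Type}

lemma isStableModel_union_of_split {G₁ G₂ : Set (GroundRule A)} {C L W : Set A}
    (hL : isStableModel G₁ L) (hG₁ : ∀ r ∈ G₁, r.head ∪ r.pos ∪ r.neg ⊆ C)
    (hG₂ : ∀ r ∈ G₂, r.head ∩ C ⊆ L) (hW : isStableModel (factRule '' L ∪ G₂) W) :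
    isStableModel (G₁ ∪ G₂) W ∧ W ∩ C = L := by
  have hLW : L ⊆ W := fun a ha =>
    mem_of_isModel_reduct hW.1 (Or.inl (mem_image_of_mem _ ha)) rfl rfl (empty_subset _)
  have hLC : L ⊆ C := fun a ha => by
    obtain ⟨r, hr, hh⟩ := mem_iUnion₂.1 (hL.subset_biUnion_head ha)
    exact hG₁ r hr (Or.inl (Or.inl hh))
  have hWC : W ∩ C = L := by
    refine subset_antisymm ?_ (subset_inter hLW hLC)
    rintro a ⟨haW, haC⟩
    obtain ⟨r, hr, ha⟩ := mem_iUnion₂.1 (hW.subset_biUnion_head haW)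
    rcases hr with ⟨b, hb, rfl⟩ | hr
    · exact (mem_singleton_iff.1 ha) ▸ hb
    · exact hG₂ r hr ⟨ha, haC⟩
  have hnegW : ∀ r ∈ G₁, r.neg ∩ W = r.neg ∩ L := fun r hr => by
    rw [← hWC, inter_comm W, ← inter_assoc, inter_eq_left.2 fun b hb => hG₁ r hr (Or.inr hb)]
  refine ⟨⟨isModel_reduct_iff.2 fun r hr hneg hpos => ?_, fun N hNW hN => ?_⟩, hWC⟩
  · rcases hr with hr | hr
    · have hposL : r.pos ⊆ L := fun b hb => hWC ▸ ⟨hpos hb, hG₁ r hr (Or.inl (Or.inr hb))⟩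
      exact (isModel_reduct_iff.1 hL.1 r hr (hnegW r hr ▸ hneg) hposL).mono
        (inter_subset_inter_right _ hLW)
    · exact isModel_reduct_iff.1 hW.1 r (Or.inr hr) hneg hpos
  · have hNC : N ∩ C = L := by
      refine hL.2 _ (hWC ▸ inter_subset_inter_left C hNW) (isModel_reduct_iff.2 ?_)
      intro r hr hneg hpos
      obtain ⟨h, hh, hhN⟩ := isModel_reduct_iff.1 hN r (Or.inl hr) ((hnegW r hr).trans hneg)
        (hpos.trans inter_subset_left)
      exact ⟨h, hh, hhN, hG₁ r hr (Or.inl (Or.inl hh))⟩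
    have hLN : L ⊆ N := hNC ▸ inter_subset_left
    refine hW.2 N hNW (isModel_reduct_iff.2 ?_)
    rintro r (⟨a, ha, rfl⟩ | hr) hneg hpos
    · exact ⟨a, rfl, hLN ha⟩
    · exact isModel_reduct_iff.1 hN r (Or.inr hr) hneg hpos

end Splitting

section Magic

variable {A : Type} {idb edb : Set (GroundRule A)} {Q : A} {M' : Set (A ⊕ A)}

/-- The IDB rules whose modified rule in `Magic(Q,G)` is switched on in `M'`. -/
def activeRules (idb : Set (GroundRule A)) (M' : Set (A ⊕ A)) : Set (GroundRule A) :=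
  {r ∈ idb | ∃ p ∈ r.head, Sum.inr p ∈ M'}

lemma activeRules_subset : activeRules idb M' ⊆ idb :=
  sep_subset _ _

/-- The splitting set: the atoms whose truth value `M'` already decides. -/
def magicSplittingSet (idb : Set (GroundRule A)) (M' : Set (A ⊕ A)) : Set A :=
  {a | Sum.inr a ∈ M' ∨ ¬ isIDBAtom idb a ∨ Sum.inl a ∈ M'}

lemma magic_query_mem (hM' : isModel M' (reduct (magicProg idb edb Q) M')) : Sum.inr Q ∈ M' :=
  mem_of_isModel_reduct hM' (Or.inl (Or.inl (Or.inl rfl))) rfl rfl (empty_subset _)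

lemma magic_mem_of_mem_head (hM' : isModel M' (reduct (magicProg idb edb Q) M'))
    {r : GroundRule A} (hr : r ∈ idb) {p : A} (hp : p ∈ r.head) (hpM : Sum.inr p ∈ M') {q : A}
    (hq : q ∈ r.head ∪ r.pos ∪ r.neg) (hqI : isIDBAtom idb q) : Sum.inr q ∈ M' := by
  rcases eq_or_ne q p with rfl | hqp
  · exact hpM
  · exact mem_of_isModel_reduct hM'
      (Or.inl (Or.inl (Or.inr ⟨r, hr, p, hp, q, ⟨hq, hqp⟩, hqI, rfl⟩))) rfl rfl
      (singleton_subset_iff.2 hpM)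

lemma inl_mem_of_mem_edb (hpart : isPartition idb edb)
    (hM' : isModel M' (reduct (magicProg idb edb Q) M')) {r : GroundRule A} (hr : r ∈ edb)
    {a : A} (ha : a ∈ r.head) : Sum.inl a ∈ M' := by
  obtain ⟨⟨b, hb⟩, hpos, hneg⟩ := hpart.2 r hr
  rw [hb, mem_singleton_iff] at ha
  subst ha
  exact mem_of_isModel_reduct hM' (Or.inr (mem_image_of_mem _ hr))
    (by simp [GroundRule.map, hb]) (by simp [GroundRule.map, hneg]) (by simp [GroundRule.map, hpos])

lemma atoms_subset_magicSplittingSet (hpart : isPartition idb edb)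
    (hM' : isModel M' (reduct (magicProg idb edb Q) M')) :
    ∀ r ∈ activeRules idb M' ∪ edb, r.head ∪ r.pos ∪ r.neg ⊆ magicSplittingSet idb M' := by
  rintro r (⟨hr, p, hp, hpM⟩ | hr) a ha
  · by_cases hI : isIDBAtom idb a
    · exact Or.inl (magic_mem_of_mem_head hM' hr hp hpM ha hI)
    · exact Or.inr (Or.inl hI)
  · obtain ⟨-, hpos, hneg⟩ := hpart.2 r hr
    rw [hpos, hneg, union_empty, union_empty] at ha
    exact Or.inr (Or.inr (inl_mem_of_mem_edb hpart hM' hr ha))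

lemma head_inter_magicSplittingSet_subset :
    ∀ r ∈ idb \ activeRules idb M', r.head ∩ magicSplittingSet idb M' ⊆ Sum.inl ⁻¹' M' := by
  rintro r ⟨hr, hinactive⟩ a ⟨ha, hmagic | hedb | hleft⟩
  · exact absurd ⟨hr, a, ha, hmagic⟩ hinactive
  · exact absurd ⟨r, hr, ha⟩ hedb
  · exact hleft

lemma isModel_reduct_magicProg_of_isModel_reduct_activeRules (hpart : isPartition idb edb)
    (hM' : isModel M' (reduct (magicProg idb edb Q) M')) {N : Set A}
    (hN : isModel N (reduct (activeRules idb M' ∪ edb) (Sum.inl ⁻¹' M'))) :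
    isModel (Sum.inl '' N ∪ Sum.inr '' (Sum.inr ⁻¹' M')) (reduct (magicProg idb edb Q) M') := by
  refine isModel_reduct_iff.2 ?_
  rintro g (((rfl | ⟨r, hr, p, hp, q, hq, hqI, rfl⟩) | ⟨r, hr, rfl⟩) | ⟨r, hr, rfl⟩) hneg hpos
  · exact ⟨Sum.inr Q, rfl, Or.inr ⟨Q, magic_query_mem hM', rfl⟩⟩
  · have hpM : Sum.inr p ∈ M' := by simpa using hpos rfl
    exact ⟨Sum.inr q, rfl, Or.inr ⟨q, magic_mem_of_mem_head hM' hr hp hpM hq.1 hqI, rfl⟩⟩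
  · obtain ⟨p, hp⟩ := r.head_ne
    have hactive : r ∈ activeRules idb M' :=
      ⟨hr, p, hp, by simpa using hpos (Or.inr (mem_image_of_mem _ hp))⟩
    have hposN : r.pos ⊆ N := fun b hb => by simpa using hpos (Or.inl (mem_image_of_mem _ hb))
    have hnegL : r.neg ∩ Sum.inl ⁻¹' M' = ∅ :=
      image_eq_empty.1 (by rw [image_inter_preimage]; exact hneg)
    obtain ⟨h, hh, hhN⟩ := isModel_reduct_iff.1 hN r (Or.inl hactive) hnegL hposN
    exact ⟨Sum.inl h, mem_image_of_mem _ hh, Or.inl (mem_image_of_mem _ hhN)⟩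
  · obtain ⟨⟨a, ha⟩, hpos₀, hneg₀⟩ := hpart.2 r hr
    have haN : a ∈ N := mem_of_isModel_reduct hN (Or.inr hr) ha hneg₀ (hpos₀ ▸ empty_subset _)
    exact ⟨Sum.inl a, by simp [GroundRule.map, ha], Or.inl (mem_image_of_mem _ haN)⟩

/-- A smaller model `N` of the reduct lifts to the model `N ∪ m(M')` of the reduct of
`Magic(Q,G)`, which the minimality of `M'` forces to be all of `M'`. -/
lemma isStableModel_activeRules (hpart : isPartition idb edb)
    (hM' : isStableModel (magicProg idb edb Q) M') :
    isStableModel (activeRules idb M' ∪ edb) (Sum.inl ⁻¹' M') := by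
  refine ⟨isModel_reduct_iff.2 fun r hr hneg hpos => ?_, fun N hNL hN => ?_⟩
  · rcases hr with ⟨hr, p, hp, hpM⟩ | hr
    · have hmagic : Sum.inr '' r.head ⊆ M' := image_subset_iff.2 fun h hh =>
        magic_mem_of_mem_head hM'.1 hr hp hpM (Or.inl (Or.inl hh)) ⟨r, hr, hh⟩
      have hfire := isModel_reduct_iff.1 hM'.1 (modifiedRule r) (Or.inl (Or.inr ⟨r, hr, rfl⟩))
        (by simp only [modifiedRule]; rw [← image_inter_preimage, hneg, image_empty])
        (union_subset (image_subset_iff.2 hpos) hmagic)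
      simp only [modifiedRule] at hfire
      rw [← image_inter_preimage] at hfire
      exact hfire.of_image
    · obtain ⟨⟨a, ha⟩, -, -⟩ := hpart.2 r hr
      exact ⟨a, ha ▸ rfl, inl_mem_of_mem_edb hpart hM'.1 hr (ha ▸ rfl)⟩
  · have hlift := isModel_reduct_magicProg_of_isModel_reduct_activeRules hpart hM'.1 hN
    rw [← hM'.2 _ (union_subset (image_subset_iff.2 hNL) (image_preimage_subset _ _)) hlift]
    ext a
    simp

end Magic

theorem magic_sound_general {A : Type} (idb edb : Set (GroundRule A)) (Q : A)
    (hpart : isPartition idb edb) (hstrat : isStratified (idb ∪ edb)) :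
    ∀ M' : Set (A ⊕ A), isStableModel (magicProg idb edb Q) M' →
      ∃ M : Set A, isStableModel (idb ∪ edb) M ∧ {a | Sum.inl a ∈ M'} ⊆ M ∧
        (Q ∈ M ↔ Sum.inl Q ∈ M') := by
  intro M' hM'
  obtain ⟨lv, hlv⟩ := hstrat
  have hlv' : IsLevelMapping (factRule '' (Sum.inl ⁻¹' M') ∪ (idb \ activeRules idb M')) lv :=
    (IsLevelMapping.mono hlv (sdiff_subset.trans subset_union_left)).factRule_image_union _
  obtain ⟨W, hW⟩ := hlv'.exists_isStableModel
  obtain ⟨hWstable, hWC⟩ := isStableModel_union_of_split (isStableModel_activeRules hpart hM')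
    (atoms_subset_magicSplittingSet hpart hM'.1) head_inter_magicSplittingSet_subset hW
  rw [union_right_comm, union_sdiff_cancel activeRules_subset] at hWstable
  have hQ : Q ∈ magicSplittingSet idb M' := Or.inl (magic_query_mem hM'.1)
  exact ⟨W, hWstable, hWC.symm.subset.trans inter_subset_left,
    fun hQW => hWC.subset ⟨hQW, hQ⟩, fun hQM => (hWC.symm.subset hQM).1⟩

/-- Soundness of the magic set transformation: for every stable model `M'` of
`Magic(Q,G)` there is a stable model `M` of `G = idb ∪ edb` containing the
left-copy part of `M'` and agreeing with `M'` on the query `Q`. -/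
theorem magic_sound {A : Type} (idb edb : Set (GroundRule A)) (Q : A)
    (hpart : isPartition idb edb) (hstrat : isStratified (idb ∪ edb))
    (hQ : isIDBAtom idb Q) (hfr : finitelyRecursive (idb ∪ edb) Q) :
    ∀ M' : Set (A ⊕ A), isStableModel (magicProg idb edb Q) M' →
      ∃ M : Set A, isStableModel (idb ∪ edb) M ∧ {a | Sum.inl a ∈ M'} ⊆ M ∧
        (Q ∈ M ↔ Sum.inl Q ∈ M') :=
  magic_sound_general idb edb Q hpart hstrat
end

section
/- Let G be a stratified ground program with an EDB/IDB partition, and let Q be an IDB query atom that is finitely recursive on G. If M is a stable model of G, then the magic variant M' = variant(Q,G,M) is a stable model of Magic(Q,G), and (the left copy of) Q ∈ M' if and only if Q ∈ M. -/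
section MagicAux

variable {A : Type}

lemma sat_reduce_iff {I : Set A} {r : GroundRule A} (h : r.neg = ∅) :
    r.reduce.satisfiedBy I ↔ r.satisfiedBy I := by
  simp [GroundRule.satisfiedBy, GroundRule.reduce, h]

lemma seed_mem (idb : Set (GroundRule A)) (Q : A) : Sum.inr Q ∈ Mstar idb Q := by
  rw [Mstar, leastModel, Set.mem_sInter]
  intro I hI
  have h := hI (factRule (Sum.inr Q)) (Or.inl rfl)
    ⟨by simp [factRule], by simp [factRule]⟩
  simpa [factRule] using h

lemma magic_step {idb : Set (GroundRule A)} {Q : A} {r : GroundRule A} (hr : r ∈ idb)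
    {p q : A} (hp : p ∈ r.head) (hmp : Sum.inr p ∈ Mstar idb Q)
    (hq : q ∈ r.head ∪ r.pos ∪ r.neg) (hqidb : isIDBAtom idb q) :
    Sum.inr q ∈ Mstar idb Q := by
  by_cases hqp : q = p
  · subst hqp; exact hmp
  · have hrule : magicRule q p ∈ magicSub idb Q :=
      Or.inr ⟨r, hr, p, hp, q, ⟨hq, hqp⟩, hqidb, rfl⟩
    rw [Mstar, leastModel, Set.mem_sInter]
    intro I hI
    have hpI : Sum.inr p ∈ I := (Set.sInter_subset_of_mem hI) hmp
    have h := hI _ hrule ⟨by simpa [magicRule] using hpI, by simp [magicRule]⟩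
    simpa [magicRule] using h

lemma Mstar_inr {idb : Set (GroundRule A)} {Q : A} {x : A ⊕ A} (hx : x ∈ Mstar idb Q) :
    ∃ a, x = Sum.inr a := by
  have hmod : isModel (Set.range (Sum.inr : A → A ⊕ A)) (magicSub idb Q) := by
    intro g hg _
    rcases hg with hg | ⟨r, hr, p, hp, q, hq, hqidb, rfl⟩
    · rw [Set.mem_singleton_iff] at hg; subst hg
      exact ⟨Sum.inr Q, rfl, ⟨Q, rfl⟩⟩
    · exact ⟨Sum.inr q, rfl, ⟨q, rfl⟩⟩
  have hsub : Mstar idb Q ⊆ Set.range Sum.inr :=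
    Set.sInter_subset_of_mem (S := {I | isModel I (magicSub idb Q)}) hmod
  obtain ⟨a, ha⟩ := hsub hx
  exact ⟨a, ha.symm⟩

lemma stable_supported {G : Set (GroundRule A)} {M : Set A} (hM : isStableModel G M)
    {a : A} (ha : a ∈ M) : ∃ r ∈ G, a ∈ r.head := by
  by_contra hcon
  push_neg at hcon
  have hmod : isModel (M \ {a}) (reduct G M) := by
    rintro g ⟨r, hr, hneg, rfl⟩ ⟨hpos, -⟩
    obtain ⟨h, hh, hhM⟩ := hM.1 _ ⟨r, hr, hneg, rfl⟩
      ⟨hpos.trans Set.diff_subset, by simp [GroundRule.reduce]⟩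
    exact ⟨h, hh, hhM, fun he => hcon r hr (he ▸ hh)⟩
  have heq := hM.2 _ Set.diff_subset hmod
  have : a ∈ M \ {a} := heq.symm ▸ ha
  exact this.2 rfl

end MagicAux

/-- Completeness of the magic set transformation: the magic variant of a stable
model `M` of `G = idb ∪ edb` is a stable model of `Magic(Q,G)` preserving
truth/falsity of the query `Q`. -/
theorem magicVariant_isStable {A : Type} (idb edb : Set (GroundRule A)) (Q : A)
    (hpart : isPartition idb edb) (hstrat : isStratified (idb ∪ edb))
    (hQ : isIDBAtom idb Q) (hfr : finitelyRecursive (idb ∪ edb) Q)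
    (M : Set A) (hM : isStableModel (idb ∪ edb) M) :
    isStableModel (magicProg idb edb Q) (magicVariant idb edb Q M) ∧
      (Sum.inl Q ∈ magicVariant idb edb Q M ↔ Q ∈ M) := by
  obtain ⟨hdisj, hfact⟩ := hpart
  -- membership characterizations for the magic variant
  have hinr : ∀ b : A, Sum.inr b ∈ magicVariant idb edb Q M ↔ Sum.inr b ∈ Mstar idb Q := by
    intro b
    constructor
    · rintro ((h | h) | h)
      · simp only [Set.mem_iUnion, Set.mem_image] at h
        obtain ⟨r, hr, a, ha, hab⟩ := h
        exact absurd hab (by simp)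
      · exact h
      · obtain ⟨a, haM, haS, hab⟩ := h
        exact absurd hab (by simp)
    · intro h; exact Or.inl (Or.inr h)
  have hinl : ∀ a : A, Sum.inl a ∈ magicVariant idb edb Q M ↔
      ((∃ r ∈ edb, a ∈ r.head) ∨ (a ∈ M ∧ Sum.inr a ∈ Mstar idb Q)) := by
    intro a
    constructor
    · rintro ((h | h) | h)
      · simp only [Set.mem_iUnion, Set.mem_image] at h
        obtain ⟨r, hr, b, hb, hab⟩ := h
        exact Or.inl ⟨r, hr, by rwa [show b = a from Sum.inl.injEq b a ▸ hab] at hb⟩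
      · obtain ⟨b, hb⟩ := Mstar_inr h
        exact absurd hb (by simp)
      · obtain ⟨b, hbM, hbS, hab⟩ := h
        obtain rfl : b = a := by simpa using hab.symm
        exact Or.inr ⟨hbM, hbS⟩
    · rintro (⟨r, hr, ha⟩ | ⟨haM, haS⟩)
      · exact Or.inl (Or.inl (Set.mem_biUnion hr ⟨a, ha, rfl⟩))
      · exact Or.inr ⟨a, haM, haS, rfl⟩
  -- heads of EDB facts are in M
  have hEDBM : ∀ r ∈ edb, ∀ a ∈ r.head, a ∈ M := by
    intro r hr a ha
    obtain ⟨⟨a₀, hh⟩, hp0, hn0⟩ := hfact r hr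
    have hred : r.reduce ∈ reduct (idb ∪ edb) M := ⟨r, Or.inr hr, by rw [hn0]; simp, rfl⟩
    obtain ⟨b, hb, hbM⟩ := hM.1 _ hred
      ⟨by show r.pos ⊆ M; rw [hp0]; simp, by simp [GroundRule.reduce]⟩
    have hb' : b ∈ r.head := hb
    rw [hh, Set.mem_singleton_iff] at hb' ha
    rw [ha, ← hb']; exact hbM
  -- every atom of M is supported
  have hsupp : ∀ a ∈ M, isIDBAtom idb a ∨ ∃ r ∈ edb, a ∈ r.head := by
    intro a ha
    obtain ⟨r, hr, hhead⟩ := stable_supported hM ha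
    rcases hr with h | h
    · exact Or.inl ⟨r, h, hhead⟩
    · exact Or.inr ⟨r, h, hhead⟩
  have hLM : ∀ a : A, Sum.inl a ∈ magicVariant idb edb Q M → a ∈ M := by
    intro a h
    rcases (hinl a).1 h with ⟨r, hr, ha⟩ | ⟨haM, -⟩
    · exact hEDBM r hr a ha
    · exact haM
  refine ⟨⟨?_, ?_⟩, ?_⟩
  · -- the magic variant is a model of the reduct of the magic program
    rintro g ⟨r, hr, hneg, rfl⟩ ⟨hpos, -⟩
    rcases hr with (hr | hr) | hr
    · -- seed or magic rule
      rcases hr with hr | ⟨r₀, hr₀, p, hp, q, hq, hqi, rfl⟩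
      · rw [Set.mem_singleton_iff] at hr; subst hr
        exact ⟨Sum.inr Q, rfl, (hinr Q).2 (seed_mem idb Q)⟩
      · have hp' : Sum.inr p ∈ Mstar idb Q :=
          (hinr p).1 (hpos (show Sum.inr p ∈ (magicRule q p).pos from rfl))
        exact ⟨Sum.inr q, rfl, (hinr q).2 (magic_step hr₀ hp hp' hq.1 hqi)⟩
    · -- modified rule
      obtain ⟨r₀, hr₀, rfl⟩ := hr
      have hheadS : ∀ h ∈ r₀.head, Sum.inr h ∈ Mstar idb Q := fun h hh =>
        (hinr h).1 (hpos (Or.inr ⟨h, hh, rfl⟩))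
      obtain ⟨p, hp⟩ := r₀.head_ne
      have hposM : r₀.pos ⊆ M := fun b hb => hLM b (hpos (Or.inl ⟨b, hb, rfl⟩))
      have hnegM : r₀.neg ∩ M = ∅ := by
        rw [Set.eq_empty_iff_forall_notMem]
        rintro b ⟨hbneg, hbM⟩
        have hbM' : Sum.inl b ∈ magicVariant idb edb Q M := by
          rcases hsupp b hbM with hidb | hedb
          · exact (hinl b).2
              (Or.inr ⟨hbM, magic_step hr₀ hp (hheadS p hp) (Or.inr hbneg) hidb⟩)
          · exact (hinl b).2 (Or.inl hedb)
        rw [Set.eq_empty_iff_forall_notMem] at hneg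
        exact hneg (Sum.inl b) ⟨⟨b, hbneg, rfl⟩, hbM'⟩
      obtain ⟨h, hh, hhM⟩ := hM.1 _ ⟨r₀, Or.inl hr₀, hnegM, rfl⟩
        ⟨hposM, by simp [GroundRule.reduce]⟩
      exact ⟨Sum.inl h, ⟨h, hh, rfl⟩, (hinl h).2 (Or.inr ⟨hhM, hheadS h hh⟩)⟩
    · -- EDB fact
      obtain ⟨r₀, hr₀, rfl⟩ := hr
      obtain ⟨⟨a₀, hh⟩, -, -⟩ := hfact r₀ hr₀
      refine ⟨Sum.inl a₀, ⟨a₀, by rw [hh]; rfl, rfl⟩, ?_⟩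
      exact (hinl a₀).2 (Or.inl ⟨r₀, hr₀, by rw [hh]; rfl⟩)
  · -- minimality
    intro N hNsub hNmod
    have hSN : Mstar idb Q ⊆ N := by
      have hNm : isModel N (magicSub idb Q) := by
        intro g hg
        have hgneg : g.neg = ∅ := by
          rcases hg with hg | ⟨r, hr, p, hp, q, hq, hqi, rfl⟩
          · rw [Set.mem_singleton_iff] at hg; subst hg; rfl
          · rfl
        rw [← sat_reduce_iff hgneg]
        exact hNmod _ ⟨g, Or.inl (Or.inl hg), by rw [hgneg]; simp, rfl⟩
      exact Set.sInter_subset_of_mem (S := {I | isModel I (magicSub idb Q)}) hNm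
    have hEN : ∀ r ∈ edb, ∀ a ∈ r.head, Sum.inl a ∈ N := by
      intro r hr a ha
      obtain ⟨⟨a₀, hh⟩, hp0, hn0⟩ := hfact r hr
      have hred : (GroundRule.map Sum.inl r).reduce ∈
          reduct (magicProg idb edb Q) (magicVariant idb edb Q M) :=
        ⟨_, Or.inr ⟨r, hr, rfl⟩, by show Sum.inl '' r.neg ∩ _ = ∅; rw [hn0]; simp, rfl⟩
      obtain ⟨x, hx, hxN⟩ := hNmod _ hred
        ⟨by show Sum.inl '' r.pos ⊆ N; rw [hp0]; simp, by simp [GroundRule.reduce]⟩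
      obtain ⟨b, hb, rfl⟩ := hx
      rw [hh, Set.mem_singleton_iff] at hb ha
      rw [ha, ← hb]; exact hxN
    have hkey : ∀ a ∈ M, Sum.inr a ∈ Mstar idb Q → Sum.inl a ∈ N := by
      intro a haM haS
      have hsub : ({b | Sum.inl b ∈ N} ∪ (M \ {b | Sum.inr b ∈ Mstar idb Q}) : Set A) ⊆ M := by
        rintro b (hb | hb)
        · exact hLM b (hNsub hb)
        · exact hb.1
      have hmod : isModel ({b | Sum.inl b ∈ N} ∪ (M \ {b | Sum.inr b ∈ Mstar idb Q}))
          (reduct (idb ∪ edb) M) := by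
        rintro g ⟨r, hr, hnegM, rfl⟩ ⟨hpos, -⟩
        rcases hr with hr | hr
        · -- IDB rule
          obtain ⟨h, hh, hhM⟩ := hM.1 _ ⟨r, Or.inl hr, hnegM, rfl⟩
            ⟨hpos.trans hsub, by simp [GroundRule.reduce]⟩
          by_cases hhS : Sum.inr h ∈ Mstar idb Q
          · have hheadS : ∀ p ∈ r.head, Sum.inr p ∈ Mstar idb Q := fun p hp =>
              magic_step hr hh hhS (Or.inl (Or.inl hp)) ⟨r, hr, hp⟩
            have hposN : ∀ b ∈ r.pos, Sum.inl b ∈ N := by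
              intro b hb
              rcases hpos hb with hbN | ⟨hbM, hbS⟩
              · exact hbN
              · rcases hsupp b hbM with hidb | ⟨r₁, hr₁, hb₁⟩
                · exact absurd (magic_step hr hh hhS (Or.inl (Or.inr hb)) hidb) hbS
                · exact hEN r₁ hr₁ b hb₁
            have hmodred : (modifiedRule r).reduce ∈
                reduct (magicProg idb edb Q) (magicVariant idb edb Q M) := by
              refine ⟨_, Or.inl (Or.inr ⟨r, hr, rfl⟩), ?_, rfl⟩
              show Sum.inl '' r.neg ∩ _ = ∅
              rw [Set.eq_empty_iff_forall_notMem]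
              rintro x ⟨⟨b, hb, rfl⟩, hbM'⟩
              rw [Set.eq_empty_iff_forall_notMem] at hnegM
              exact hnegM b ⟨hb, hLM b hbM'⟩
            have hposN' : (modifiedRule r).pos ⊆ N := by
              rintro x (⟨b, hb, rfl⟩ | ⟨p, hp, rfl⟩)
              · exact hposN b hb
              · exact hSN (hheadS p hp)
            obtain ⟨x, hx, hxN⟩ := hNmod _ hmodred
              ⟨hposN', by simp [GroundRule.reduce]⟩
            obtain ⟨h', hh', rfl⟩ := hx
            exact ⟨h', hh', Or.inl hxN⟩
          · exact ⟨h, hh, Or.inr ⟨hhM, hhS⟩⟩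
        · -- EDB fact
          obtain ⟨⟨a₀, hh⟩, -, -⟩ := hfact r hr
          exact ⟨a₀, by show a₀ ∈ r.head; rw [hh]; rfl,
            Or.inl (hEN r hr a₀ (by rw [hh]; rfl))⟩
      have heq := hM.2 _ hsub hmod
      have haN : a ∈ ({b | Sum.inl b ∈ N} ∪ (M \ {b | Sum.inr b ∈ Mstar idb Q}) : Set A) :=
        heq.symm ▸ haM
      rcases haN with h | h
      · exact h
      · exact absurd haS h.2
    refine Set.Subset.antisymm hNsub ?_
    intro x hx
    match x with
    | Sum.inr b => exact hSN ((hinr b).1 hx)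
    | Sum.inl a =>
      rcases (hinl a).1 hx with ⟨r, hr, ha⟩ | ⟨haM, haS⟩
      · exact hEN r hr a ha
      · exact hkey a haM haS
  · -- the query is preserved
    constructor
    · intro h
      rcases (hinl Q).1 h with ⟨r, hr, hQh⟩ | ⟨h, -⟩
      · exact hEDBM r hr Q hQh
      · exact h
    · intro h
      exact (hinl Q).2 (Or.inr ⟨h, seed_mem idb Q⟩)
end

section
/- Let G be a ground program with an EDB/IDB partition and Q an IDB query atom. If G is stratified (i.e., admits a level mapping λ : A → ℕ), then the magic transform Magic(Q,G) is stratified as a ground program over the atom type A ⊕ A (i.e., it admits a level mapping λ' : A ⊕ A → ℕ). -/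
/-- The magic transform of a stratified program is stratified. -/
theorem magicProg_isStratified {A : Type} (idb edb : Set (GroundRule A)) (Q : A)
    (hpart : isPartition idb edb) (hQ : isIDBAtom idb Q)
    (hstrat : isStratified (idb ∪ edb)) :
    isStratified (magicProg idb edb Q) := by
  obtain ⟨lv, hlv⟩ := hstrat
  refine ⟨Sum.elim (fun a => lv a + 1) (fun _ => 0), ?_⟩
  rintro r hr h hh
  rcases hr with (hr | hr) | hr
  · rcases hr with hr | ⟨s, hs, p, hp, q, hq, hqi, rfl⟩
    · -- seed fact
      simp only [Set.mem_singleton_iff] at hr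
      subst hr
      constructor
      · intro b hb; exact absurd hb (Set.notMem_empty b)
      · intro b hb; exact absurd hb (Set.notMem_empty b)
    · -- magic rule
      simp only [magicRule, Set.mem_singleton_iff] at hh
      subst hh
      constructor
      · intro b hb
        simp only [magicRule, Set.mem_singleton_iff] at hb
        subst hb; simp
      · intro b hb; exact absurd hb (Set.notMem_empty b)
  · -- modified rule
    obtain ⟨s, hs, rfl⟩ := hr
    simp only [modifiedRule, Set.mem_image] at hh
    obtain ⟨a, ha, rfl⟩ := hh
    have hstr := hlv s (Set.mem_union_left _ hs) a ha
    constructor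
    · intro b hb
      rcases hb with ⟨c, hc, rfl⟩ | ⟨c, hc, rfl⟩
      · simpa using Nat.add_le_add_right (hstr.1 c hc) 1
      · simp
    · intro b hb
      obtain ⟨c, hc, rfl⟩ := hb
      simpa using Nat.add_lt_add_right (hstr.2 c hc) 1
  · -- EDB fact
    obtain ⟨s, hs, rfl⟩ := hr
    obtain ⟨⟨a, hhead⟩, hpos, hneg⟩ := hpart.2 s hs
    constructor
    · intro b hb
      simp only [GroundRule.map, hpos, Set.image_empty] at hb
      exact absurd hb (Set.notMem_empty b)
    · intro b hb
      simp only [GroundRule.map, hneg, Set.image_empty] at hb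
      exact absurd hb (Set.notMem_empty b)
end

section
/- Let G be a ground program with an EDB/IDB partition and Q an IDB query atom. The magic subprogram of Magic(Q,G) (the seed fact together with the magic rules) has a unique stable model, namely its least model M*, and M* = {m(a) : a is an IDB atom of G and a ∈ R(Q,G)}. In particular, if Q is finitely recursive on G, then M* is finite. -/
section Aux
variable {A : Type}

lemma magicSub_neg_empty {idb : Set (GroundRule A)} {Q : A} {g : GroundRule (A ⊕ A)}
    (hg : g ∈ magicSub idb Q) : g.neg = ∅ := by
  rcases hg with hg | ⟨r, hr, p, hp, q, hq, hq2, rfl⟩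
  · simp only [Set.mem_singleton_iff] at hg; subst hg; rfl
  · rfl

lemma magicSub_head_singleton {idb : Set (GroundRule A)} {Q : A} {g : GroundRule (A ⊕ A)}
    (hg : g ∈ magicSub idb Q) : ∃ h, g.head = {h} := by
  rcases hg with hg | ⟨r, hr, p, hp, q, hq, hq2, rfl⟩
  · simp only [Set.mem_singleton_iff] at hg; subst hg; exact ⟨Sum.inr Q, rfl⟩
  · exact ⟨Sum.inr q, rfl⟩

lemma reduce_eq {r : GroundRule A} (h : r.neg = ∅) : r.reduce = r := by
  cases r
  simp only [GroundRule.reduce] at *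
  subst h
  rfl

lemma reduct_magicSub (idb : Set (GroundRule A)) (Q : A) (M : Set (A ⊕ A)) :
    reduct (magicSub idb Q) M = magicSub idb Q := by
  ext g
  constructor
  · rintro ⟨r, hr, -, rfl⟩
    rw [reduce_eq (magicSub_neg_empty hr)]
    exact hr
  · intro hg
    exact ⟨g, hg, by rw [magicSub_neg_empty hg]; simp,
      (reduce_eq (magicSub_neg_empty hg)).symm⟩

lemma Mstar_subset {idb : Set (GroundRule A)} {Q : A} {I : Set (A ⊕ A)}
    (hI : isModel I (magicSub idb Q)) : Mstar idb Q ⊆ I :=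
  fun _ hx => Set.mem_sInter.mp hx I hI

lemma Mstar_model (idb : Set (GroundRule A)) (Q : A) :
    isModel (Mstar idb Q) (magicSub idb Q) := by
  intro g hg hbody
  obtain ⟨h, hh⟩ := magicSub_head_singleton hg
  have hmem : h ∈ Mstar idb Q := by
    intro I hI
    have hs := hI g hg ⟨hbody.1.trans (Mstar_subset hI), by rw [magicSub_neg_empty hg]; simp⟩
    rw [hh] at hs
    obtain ⟨x, hx1, hx2⟩ := hs
    simp only [Set.mem_singleton_iff] at hx1
    subst hx1; exact hx2
  rw [hh]
  exact ⟨h, rfl, hmem⟩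

lemma model_seed {idb : Set (GroundRule A)} {Q : A} {I : Set (A ⊕ A)}
    (hI : isModel I (magicSub idb Q)) : Sum.inr Q ∈ I := by
  have hs := hI (factRule (Sum.inr Q)) (Or.inl rfl)
    ⟨Set.empty_subset _, by simp [factRule]⟩
  simpa [factRule] using hs

lemma model_magic {idb : Set (GroundRule A)} {Q : A} {I : Set (A ⊕ A)}
    (hI : isModel I (magicSub idb Q)) {q p : A}
    (hmem : magicRule q p ∈ magicSub idb Q) (hp : Sum.inr p ∈ I) : Sum.inr q ∈ I := by
  have hs := hI _ hmem ⟨by simpa [magicRule] using hp, by simp [magicRule]⟩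
  simpa [magicRule] using hs

lemma relevant_self {G : Set (GroundRule A)} {Q : A} : Q ∈ relevantFor G Q :=
  fun _ hR => hR.1

lemma relevant_closed {G : Set (GroundRule A)} {Q : A} {r : GroundRule A} (hr : r ∈ G)
    (h : (r.head ∩ relevantFor G Q).Nonempty) :
    r.head ∪ r.pos ∪ r.neg ⊆ relevantFor G Q := by
  obtain ⟨p, hp, hpR⟩ := h
  intro x hx R hR
  exact hR.2 r hr ⟨p, hp, hpR R hR⟩ hx

end Aux

/-- The magic subprogram has a unique stable model, namely its least model `M*`,
which consists exactly of the magic atoms of the IDB atoms relevant for `Q` in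
`G = idb ∪ edb`; if `Q` is finitely recursive on `G`, then `M*` is finite. -/
theorem magicSub_least_unique_stable {A : Type} (idb edb : Set (GroundRule A)) (Q : A)
    (hpart : isPartition idb edb) (hQ : isIDBAtom idb Q) :
    isModel (Mstar idb Q) (magicSub idb Q) ∧
      (∀ I : Set (A ⊕ A), isModel I (magicSub idb Q) → Mstar idb Q ⊆ I) ∧
      isStableModel (magicSub idb Q) (Mstar idb Q) ∧
      (∀ M : Set (A ⊕ A), isStableModel (magicSub idb Q) M → M = Mstar idb Q) ∧
      Mstar idb Q =
        {x | ∃ a, isIDBAtom idb a ∧ a ∈ relevantFor (idb ∪ edb) Q ∧ x = Sum.inr a} ∧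
      (finitelyRecursive (idb ∪ edb) Q → (Mstar idb Q).Finite) := by
  have hmodel := Mstar_model idb Q
  have hleast : ∀ I : Set (A ⊕ A), isModel I (magicSub idb Q) → Mstar idb Q ⊆ I :=
    fun _ hI => Mstar_subset hI
  have hstable : isStableModel (magicSub idb Q) (Mstar idb Q) := by
    constructor
    · rw [reduct_magicSub]; exact hmodel
    · intro N hN hNmod
      rw [reduct_magicSub] at hNmod
      exact Set.Subset.antisymm hN (hleast N hNmod)
  have hunique : ∀ M : Set (A ⊕ A), isStableModel (magicSub idb Q) M → M = Mstar idb Q := by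
    intro M hM
    have hMmod : isModel M (magicSub idb Q) := by
      have := hM.1; rwa [reduct_magicSub] at this
    exact (hM.2 (Mstar idb Q) (hleast M hMmod) (by rw [reduct_magicSub]; exact hmodel)).symm
  have heq : Mstar idb Q =
      {x | ∃ a, isIDBAtom idb a ∧ a ∈ relevantFor (idb ∪ edb) Q ∧ x = Sum.inr a} := by
    apply Set.Subset.antisymm
    · apply hleast
      intro g hg hbody
      rcases hg with hg | ⟨r, hr, p, hp, q, hq, hqIDB, rfl⟩
      · simp only [Set.mem_singleton_iff] at hg; subst hg
        exact ⟨Sum.inr Q, rfl, ⟨Q, hQ, relevant_self, rfl⟩⟩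
      · have hpT : Sum.inr p ∈
            {x | ∃ a, isIDBAtom idb a ∧ a ∈ relevantFor (idb ∪ edb) Q ∧ x = Sum.inr a} :=
          hbody.1 rfl
        obtain ⟨a, haIDB, haRel, ha⟩ := hpT
        have hpa : p = a := by simpa using ha
        subst hpa
        have hqRel : q ∈ relevantFor (idb ∪ edb) Q :=
          relevant_closed (Or.inl hr) ⟨p, hp, haRel⟩ hq.1
        exact ⟨Sum.inr q, rfl, ⟨q, hqIDB, hqRel, rfl⟩⟩
    · rintro x ⟨a, haIDB, haRel, rfl⟩
      have key : a ∈ {b | isIDBAtom idb b → Sum.inr b ∈ Mstar idb Q} := by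
        apply haRel
        constructor
        · intro _ I hI
          exact model_seed hI
        · rintro r hr ⟨c, hc, hcR⟩
          rcases hr with hr | hr
          · have hcIDB : isIDBAtom idb c := ⟨r, hr, hc⟩
            have hcM : Sum.inr c ∈ Mstar idb Q := hcR hcIDB
            intro x hx hxIDB
            by_cases hxc : x = c
            · subst hxc; exact hcM
            · have hmem : magicRule x c ∈ magicSub idb Q :=
                Or.inr ⟨r, hr, c, hc, x, ⟨hx, hxc⟩, hxIDB, rfl⟩
              exact model_magic hmodel hmem hcM
          · obtain ⟨⟨b, hb⟩, hpos, hneg⟩ := hpart.2 r hr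
            intro x hx
            rw [hb, hpos, hneg] at hx
            simp only [Set.union_empty, Set.mem_singleton_iff] at hx
            rw [hb] at hc
            simp only [Set.mem_singleton_iff] at hc
            subst hx; subst hc
            exact hcR
      exact key haIDB
  refine ⟨hmodel, hleast, hstable, hunique, heq, ?_⟩
  intro hfin
  rw [heq]
  apply Set.Finite.subset (hfin.image Sum.inr)
  rintro x ⟨a, _, ha, rfl⟩
  exact ⟨a, ha, rfl⟩
end

section
/- Let G be a ground program with an EDB/IDB partition and Q an IDB query atom that is finitely recursive on G. Then every rule r ∈ G with H(r) ∩ R(Q,G) ≠ ∅ satisfies H(r) ∪ B⁺(r) ∪ B⁻(r) ⊆ R(Q,G), and the set {r ∈ G : H(r) ∩ R(Q,G) ≠ ∅} is finite. Consequently, the set of modified rules of Magic(Q,G) all of whose magic positive body atoms belong to the least model M* of the magic subprogram is finite. -/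
lemma GroundRule.ext' {A : Type} {r s : GroundRule A} (h1 : r.head = s.head)
    (h2 : r.pos = s.pos) (h3 : r.neg = s.neg) : r = s := by
  cases r; cases s; simp_all

/-- For a finitely recursive query: every rule whose head intersects `R(Q,G)` has
all its atoms in `R(Q,G)`, only finitely many rules of `G` have heads intersecting
`R(Q,G)`, and consequently only finitely many modified rules of `Magic(Q,G)` have
all their magic positive body atoms in `M*`. -/
theorem relevant_rules_finite {A : Type} (idb edb : Set (GroundRule A)) (Q : A)
    (hpart : isPartition idb edb) (hQ : isIDBAtom idb Q)
    (hfr : finitelyRecursive (idb ∪ edb) Q) :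
    (∀ r ∈ idb ∪ edb, (r.head ∩ relevantFor (idb ∪ edb) Q).Nonempty →
        r.head ∪ r.pos ∪ r.neg ⊆ relevantFor (idb ∪ edb) Q) ∧
      {r ∈ idb ∪ edb | (r.head ∩ relevantFor (idb ∪ edb) Q).Nonempty}.Finite ∧
      {g | ∃ r ∈ idb, Sum.inr '' r.head ⊆ Mstar idb Q ∧ g = modifiedRule r}.Finite := by
  set R := relevantFor (idb ∪ edb) Q with hRdef
  have hQR : Q ∈ R := by
    intro S hS
    exact hS.1
  have hclosed : ∀ r ∈ idb ∪ edb, (r.head ∩ R).Nonempty →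
      r.head ∪ r.pos ∪ r.neg ⊆ R := by
    rintro r hr ⟨h, hh, hhR⟩ a ha S hS
    exact hS.2 r hr ⟨h, hh, hhR S hS⟩ ha
  have hfinR : R.Finite := hfr
  -- part 2
  have hsub : ∀ r ∈ idb ∪ edb, (r.head ∩ R).Nonempty →
      r.head ⊆ R ∧ r.pos ⊆ R ∧ r.neg ⊆ R := by
    intro r hr hn
    have h := hclosed r hr hn
    refine ⟨?_, ?_, ?_⟩ <;> intro a ha <;> apply h
    · exact Or.inl (Or.inl ha)
    · exact Or.inl (Or.inr ha)
    · exact Or.inr ha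
  have hfin2 : {r ∈ idb ∪ edb | (r.head ∩ R).Nonempty}.Finite := by
    have hinj : Set.InjOn (fun r : GroundRule A => (r.head, r.pos, r.neg))
        {r ∈ idb ∪ edb | (r.head ∩ R).Nonempty} := by
      intro r _ s _ h
      simp only [Prod.mk.injEq] at h
      exact GroundRule.ext' h.1 h.2.1 h.2.2
    apply Set.Finite.of_finite_image _ hinj
    have hpow : {t : Set A | t ⊆ R}.Finite := hfinR.finite_subsets
    apply Set.Finite.subset ((hpow.prod (hpow.prod hpow)))
    rintro _ ⟨r, hr, rfl⟩
    obtain ⟨h1, h2, h3⟩ := hsub r hr.1 hr.2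
    exact ⟨h1, h2, h3⟩
  refine ⟨hclosed, hfin2, ?_⟩
  -- part 3: atoms whose magic atom is in M* are relevant
  have hMR : ∀ a, Sum.inr a ∈ Mstar idb Q → a ∈ R := by
    have hmodel : isModel {x : A ⊕ A | ∀ a, x = Sum.inr a → a ∈ R} (magicSub idb Q) := by
      rintro g (hg | hg)
      · -- seed fact
        rcases hg with rfl
        intro _
        refine ⟨Sum.inr Q, rfl, ?_⟩
        rintro a ha
        injection ha with ha; subst ha; exact hQR
      · obtain ⟨r, hr, p, hp, q, hq, _hidbq, rfl⟩ := hg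
        rintro ⟨hpos, -⟩
        have hpR : p ∈ R := hpos rfl p rfl
        have hall := hclosed r (Or.inl hr) ⟨p, hp, hpR⟩
        have hqR : q ∈ R := hall hq.1
        refine ⟨Sum.inr q, rfl, ?_⟩
        rintro a ha
        injection ha with ha; subst ha; exact hqR
    intro a ha
    exact ha _ hmodel a rfl
  have : {g | ∃ r ∈ idb, Sum.inr '' r.head ⊆ Mstar idb Q ∧ g = modifiedRule r} ⊆
      modifiedRule '' {r ∈ idb ∪ edb | (r.head ∩ R).Nonempty} := by
    rintro _ ⟨r, hr, hm, rfl⟩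
    obtain ⟨p, hp⟩ := r.head_ne
    have : Sum.inr p ∈ Mstar idb Q := hm ⟨p, hp, rfl⟩
    exact ⟨r, ⟨Or.inl hr, ⟨p, hp, hMR p this⟩⟩, rfl⟩
  exact Set.Finite.subset (hfin2.image _) this
end

section
/- For every deterministic Turing machine M with semi-infinite tape and every input string x, the least model of the definite ground program P_M contains the query atom Q_{M(x)} if and only if M accepts x. Equivalently, P_M bravely entails Q_{M(x)} if and only if M accepts x, and P_M cautiously entails Q_{M(x)} if and only if M accepts x. -/
/-- Head-movement direction of a Turing machine. -/
inductive Dir : Type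
  | left : Dir
  | right : Dir

/-- Configurations of a Turing machine with semi-infinite tape: current state,
symbols to the left of the head (in reverse order), symbol under the head, and
the explicitly represented symbols to the right. -/
abbrev TMConfig (Sg St : Type) : Type := St × List Sg × Sg × List Sg

/-- The rule `c :- c'.` -/
def implRule {A : Type} (c c' : A) : GroundRule A :=
  ⟨{c}, {c'}, ∅, Set.finite_singleton _, Set.finite_singleton _, Set.finite_empty,
    Set.singleton_nonempty _⟩

/-- The partial successor function of a deterministic Turing machine with
semi-infinite tape, final state `sf`, blank symbol `blank` and transition
function `δ`. Configurations in the final state have no successor. -/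
def tmStep {Sg St : Type} [DecidableEq St] (sf : St) (blank : Sg)
    (δ : St × Sg → St × Sg × Dir) : TMConfig Sg St → Option (TMConfig Sg St)
  | (s, l, v, r) =>
    if s = sf then none
    else
      match δ (s, v), l, r with
      | (_, _, Dir.left), [], _ => none
      | (s', L', Dir.left), V :: L, r => some (s', L, V, L' :: r)
      | (s', v', Dir.right), l, [] => some (s', v' :: l, blank, [])
      | (s', v', Dir.right), l, V :: R => some (s', v' :: l, V, R)

/-- Iteration of a partial successor function. -/
def tmSteps {C : Type} (step : C → Option C) : ℕ → C → Option C
  | 0, c => some c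
  | n + 1, c => (step c).bind (tmSteps step n)

/-- The initial configuration of a machine with initial state `si` on input `x`. -/
def tmInit {Sg St : Type} (si : St) (blank : Sg) : List Sg → TMConfig Sg St
  | [] => (si, [], blank, [])
  | x :: xs => (si, [], x, xs)

/-- The machine accepts `x`: some iterate of the successor function starting
from the initial configuration reaches the final state `sf`. -/
def tmAccepts {Sg St : Type} [DecidableEq St] (si sf : St) (blank : Sg)
    (δ : St × Sg → St × Sg × Dir) (x : List Sg) : Prop :=
  ∃ n c, tmSteps (tmStep sf blank δ) n (tmInit si blank x) = some c ∧ c.1 = sf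

/-- The definite ground program `P_M` encoding the Turing machine: a fact for every
configuration in the final state, and a rule `c :- c'.` for every non-final
configuration `c` with defined successor `c'`. -/
def tmProg {Sg St : Type} [DecidableEq St] (sf : St) (blank : Sg)
    (δ : St × Sg → St × Sg × Dir) : Set (GroundRule (TMConfig Sg St)) :=
  {g | ∃ l v r, g = factRule ((sf, l, v, r) : TMConfig Sg St)} ∪
    {g | ∃ c c', c.1 ≠ sf ∧ tmStep sf blank δ c = some c' ∧ g = implRule c c'}

section TMAux

variable {A : Type}

lemma sat_reduce {I : Set A} {r : GroundRule A} (hneg : r.neg = ∅) :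
    r.reduce.satisfiedBy I ↔ r.satisfiedBy I := by
  unfold GroundRule.satisfiedBy GroundRule.reduce
  simp [hneg]

lemma isModel_reduct_iff_s10 {G : Set (GroundRule A)} (hdef : ∀ r ∈ G, r.neg = ∅)
    {M I : Set A} :
    isModel I (reduct G M) ↔ isModel I G := by
  constructor
  · intro h r hr
    have hmem : r.reduce ∈ reduct G M := ⟨r, hr, by simp [hdef r hr], rfl⟩
    exact (sat_reduce (hdef r hr)).mp (h _ hmem)
  · rintro h g ⟨r, hr, -, rfl⟩
    exact (sat_reduce (hdef r hr)).mpr (h r hr)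

lemma leastModel_isModel {G : Set (GroundRule A)}
    (hdef : ∀ r ∈ G, r.neg = ∅) (hsing : ∀ r ∈ G, ∃ a, r.head = {a}) :
    isModel (leastModel G) G := by
  intro r hr
  obtain ⟨a, ha⟩ := hsing r hr
  rintro ⟨hpos, -⟩
  rw [ha]
  refine ⟨a, rfl, ?_⟩
  intro I hI
  have hsub : leastModel G ⊆ I := Set.sInter_subset_of_mem hI
  have := hI r hr ⟨hpos.trans hsub, by simp [hdef r hr]⟩
  rw [ha] at this
  obtain ⟨b, hb, hbI⟩ := this
  rwa [Set.mem_singleton_iff.mp hb] at hbI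

lemma stable_iff_least {G : Set (GroundRule A)}
    (hdef : ∀ r ∈ G, r.neg = ∅) (hsing : ∀ r ∈ G, ∃ a, r.head = {a}) (M : Set A) :
    isStableModel G M ↔ M = leastModel G := by
  constructor
  · rintro ⟨hmod, hmin⟩
    have hM : isModel M G := (isModel_reduct_iff_s10 hdef).mp hmod
    have hsub : leastModel G ⊆ M := Set.sInter_subset_of_mem hM
    exact (hmin _ hsub ((isModel_reduct_iff_s10 hdef).mpr
      (leastModel_isModel hdef hsing))).symm
  · rintro rfl
    refine ⟨(isModel_reduct_iff_s10 hdef).mpr (leastModel_isModel hdef hsing), ?_⟩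
    intro N hN hNmod
    exact Set.Subset.antisymm hN
      (Set.sInter_subset_of_mem ((isModel_reduct_iff_s10 hdef).mp hNmod))

variable {Sg St : Type} [DecidableEq St]

lemma tmProg_defn (sf : St) (blank : Sg) (δ : St × Sg → St × Sg × Dir) :
    ∀ r ∈ tmProg sf blank δ, r.neg = ∅ := by
  rintro r (⟨l, v, rr, rfl⟩ | ⟨c, c', -, -, rfl⟩) <;> rfl

lemma tmProg_sing (sf : St) (blank : Sg) (δ : St × Sg → St × Sg × Dir) :
    ∀ r ∈ tmProg sf blank δ, ∃ a, r.head = {a} := by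
  rintro r (⟨l, v, rr, rfl⟩ | ⟨c, c', -, -, rfl⟩)
  · exact ⟨_, rfl⟩
  · exact ⟨c, rfl⟩

lemma tm_acc_model (sf : St) (blank : Sg) (δ : St × Sg → St × Sg × Dir) :
    isModel {c | ∃ n c', tmSteps (tmStep sf blank δ) n c = some c' ∧ c'.1 = sf}
      (tmProg sf blank δ) := by
  rintro r (⟨l, v, rr, rfl⟩ | ⟨c, c', hne, hstep, rfl⟩) <;> rintro ⟨hpos, -⟩
  · exact ⟨(sf, l, v, rr), rfl, 0, (sf, l, v, rr), rfl, rfl⟩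
  · obtain ⟨n, cf, hsteps, hcf⟩ := hpos rfl
    exact ⟨c, rfl, n + 1, cf, by simp [tmSteps, hstep, hsteps], hcf⟩

lemma tm_acc_mem_model (sf : St) (blank : Sg) (δ : St × Sg → St × Sg × Dir)
    {I : Set (TMConfig Sg St)} (hI : isModel I (tmProg sf blank δ)) :
    ∀ n c cf, tmSteps (tmStep sf blank δ) n c = some cf → cf.1 = sf → c ∈ I := by
  intro n
  induction n with
  | zero =>
    intro c cf h hcf
    obtain rfl : c = cf := Option.some.inj h
    obtain ⟨s, l, v, r⟩ := c
    cases hcf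
    have hsat := hI _ (Or.inl ⟨l, v, r, rfl⟩)
      ⟨Set.empty_subset _, Set.empty_inter _⟩
    obtain ⟨b, hb, hbI⟩ := hsat
    rwa [Set.mem_singleton_iff.mp hb] at hbI
  | succ n ih =>
    intro c cf h hcf
    rw [tmSteps] at h
    cases hstep : tmStep sf blank δ c with
    | none => rw [hstep] at h; simp at h
    | some c1 =>
      rw [hstep] at h
      simp only [Option.bind_some, Option.bind_some] at h
      have hc1 : c1 ∈ I := ih c1 cf h hcf
      have hne : c.1 ≠ sf := by
        intro heq
        obtain ⟨s, l, v, r⟩ := c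
        simp only at heq
        subst heq
        simp [tmStep] at hstep
      have hsat := hI _ (Or.inr ⟨c, c1, hne, hstep, rfl⟩)
        ⟨by intro y hy; rwa [Set.mem_singleton_iff.mp hy], Set.empty_inter _⟩
      obtain ⟨b, hb, hbI⟩ := hsat
      rwa [Set.mem_singleton_iff.mp hb] at hbI

lemma tm_least_iff (sf : St) (blank : Sg) (δ : St × Sg → St × Sg × Dir)
    (c : TMConfig Sg St) :
    c ∈ leastModel (tmProg sf blank δ) ↔
      ∃ n c', tmSteps (tmStep sf blank δ) n c = some c' ∧ c'.1 = sf := by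
  constructor
  · intro h
    exact Set.mem_sInter.mp h _ (tm_acc_model sf blank δ)
  · rintro ⟨n, cf, hsteps, hcf⟩
    exact Set.mem_sInter.mpr fun I hI => tm_acc_mem_model sf blank δ hI n c cf hsteps hcf

end TMAux

/-- Correctness of the Turing machine encoding: the least model of `P_M` contains
the query atom `Q_{M(x)}` (the initial configuration on input `x`) iff `M` accepts
`x`; equivalently, `P_M` bravely (resp. cautiously) entails `Q_{M(x)}` iff `M`
accepts `x`. -/
theorem tmProg_correct {Sg St : Type} [Fintype Sg] [Fintype St] [DecidableEq St]
    (blank : Sg) (si sf : St) (hne : si ≠ sf)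
    (δ : St × Sg → St × Sg × Dir) (x : List Sg) (hx : blank ∉ x) :
    (tmInit si blank x ∈ leastModel (tmProg sf blank δ) ↔
        tmAccepts si sf blank δ x) ∧
      (braveEnt (tmProg sf blank δ) (tmInit si blank x) ↔
        tmAccepts si sf blank δ x) ∧
      (cautiousEnt (tmProg sf blank δ) (tmInit si blank x) ↔
        tmAccepts si sf blank δ x) := by
  have hdef := tmProg_defn sf blank δ
  have hsing := tmProg_sing sf blank δ
  have hmain : tmInit si blank x ∈ leastModel (tmProg sf blank δ) ↔
      tmAccepts si sf blank δ x := tm_least_iff sf blank δ _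
  refine ⟨hmain, ?_, ?_⟩
  · constructor
    · rintro ⟨M, hM, hQ⟩
      rw [stable_iff_least hdef hsing] at hM
      subst hM
      exact hmain.mp hQ
    · intro h
      exact ⟨leastModel (tmProg sf blank δ),
        (stable_iff_least hdef hsing _).mpr rfl, hmain.mpr h⟩
  · constructor
    · intro h
      exact hmain.mp (h _ ((stable_iff_least hdef hsing _).mpr rfl))
    · intro h M hM
      rw [stable_iff_least hdef hsing] at hM
      subst hM
      exact hmain.mpr h
end

section
/- For every deterministic Turing machine M with semi-infinite tape and every input string x, the set R(Q_{M(x)}, P_M) of atoms relevant for Q_{M(x)} in P_M equals the set of configurations reachable from the initial configuration of M on x by iterating the successor function (including the initial configuration itself). In particular, if M reaches, in finitely many steps from the initial configuration on x, a configuration with state s_f or a configuration whose successor is undefined, then Q_{M(x)} is finitely recursive on P_M. -/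
lemma tmSteps_add {C : Type} (step : C → Option C) (a b : ℕ) (c : C) :
    tmSteps step (a + b) c = (tmSteps step a c).bind (tmSteps step b) := by
  induction a generalizing c with
  | zero => simp [tmSteps]
  | succ a ih =>
    rw [Nat.succ_add]
    simp only [tmSteps]
    cases step c with
    | none => simp
    | some d => simp [ih]

lemma tmStep_final {Sg St : Type} [DecidableEq St] (sf : St) (blank : Sg)
    (δ : St × Sg → St × Sg × Dir) (c : TMConfig Sg St) (h : c.1 = sf) :
    tmStep sf blank δ c = none := by
  obtain ⟨s, l, v, r⟩ := c
  simp only at h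
  simp [tmStep, h]

/-- The atoms relevant for `Q_{M(x)}` in `P_M` are exactly the configurations
reachable from the initial configuration; in particular, if `M` reaches in finitely
many steps a final configuration or a configuration with undefined successor, then
`Q_{M(x)}` is finitely recursive on `P_M`. -/
theorem tmProg_relevant {Sg St : Type} [Fintype Sg] [Fintype St] [DecidableEq St]
    (blank : Sg) (si sf : St) (hne : si ≠ sf)
    (δ : St × Sg → St × Sg × Dir) (x : List Sg) (hx : blank ∉ x) :
    relevantFor (tmProg sf blank δ) (tmInit si blank x) =
        {c | ∃ n, tmSteps (tmStep sf blank δ) n (tmInit si blank x) = some c} ∧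
      ((∃ n c, tmSteps (tmStep sf blank δ) n (tmInit si blank x) = some c ∧
          (c.1 = sf ∨ tmStep sf blank δ c = none)) →
        finitelyRecursive (tmProg sf blank δ) (tmInit si blank x)) := by
  set step := tmStep sf blank δ with hstepdef
  set Q : TMConfig Sg St := tmInit si blank x with hQdef
  set S : Set (TMConfig Sg St) := {c | ∃ n, tmSteps step n Q = some c} with hSdef
  have hQS : Q ∈ S := ⟨0, rfl⟩
  -- S is a closed set containing Q
  have hSfam : Q ∈ S ∧ ∀ r ∈ tmProg sf blank δ, (r.head ∩ S).Nonempty →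
      r.head ∪ r.pos ∪ r.neg ⊆ S := by
    refine ⟨hQS, ?_⟩
    rintro r hr ⟨c, hcH, hcS⟩
    rcases hr with ⟨l, v, rr, rfl⟩ | ⟨c₀, c₁, hne0, hstep0, rfl⟩
    · intro a ha
      simp only [factRule, Set.union_empty, Set.mem_singleton_iff] at ha
      simp only [factRule, Set.mem_singleton_iff] at hcH
      rw [ha, ← hcH]; exact hcS
    · simp only [implRule, Set.mem_singleton_iff] at hcH
      subst hcH
      intro a ha
      simp only [implRule, Set.union_empty, Set.mem_union,
        Set.mem_singleton_iff] at ha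
      rcases ha with rfl | rfl
      · exact hcS
      · obtain ⟨n, hn⟩ := hcS
        refine ⟨n + 1, ?_⟩
        rw [tmSteps_add, hn]
        simp [tmSteps, hstepdef, hstep0]
  -- reachable configurations are relevant
  have key : ∀ n c₀ c, c₀ ∈ relevantFor (tmProg sf blank δ) Q →
      tmSteps step n c₀ = some c → c ∈ relevantFor (tmProg sf blank δ) Q := by
    intro n
    induction n with
    | zero =>
      intro c₀ c h hs
      simp only [tmSteps, Option.some_inj] at hs
      rwa [← hs]
    | succ n ih =>
      intro c₀ c h hs
      simp only [tmSteps] at hs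
      cases hst : step c₀ with
      | none => rw [hst] at hs; simp at hs
      | some c₁ =>
        rw [hst] at hs
        simp only [Option.bind_some] at hs
        have hne0 : c₀.1 ≠ sf := by
          intro h'
          rw [hstepdef, tmStep_final sf blank δ c₀ h'] at hst
          cases hst
        have hc₁ : c₁ ∈ relevantFor (tmProg sf blank δ) Q := by
          rw [relevantFor, Set.mem_sInter]
          intro R hR
          have hc₀R : c₀ ∈ R := h R hR
          have := hR.2 (implRule c₀ c₁)
            (Set.mem_union_right _ ⟨c₀, c₁, hne0, hst, rfl⟩)
            ⟨c₀, rfl, hc₀R⟩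
          exact this (Set.mem_union_left _ (Set.mem_union_right _ rfl))
        exact ih c₁ c hc₁ hs
  have hrel : relevantFor (tmProg sf blank δ) Q = S := by
    apply subset_antisymm
    · exact Set.sInter_subset_of_mem hSfam
    · rintro c ⟨n, hn⟩
      exact key n Q c (fun R hR => hR.1) hn
  refine ⟨hrel, ?_⟩
  rintro ⟨n, c, hn, hc⟩
  have hnone : step c = none := hc.elim (tmStep_final sf blank δ c) id
  rw [finitelyRecursive, hrel]
  have hsub : S ⊆ (fun m => (tmSteps step m Q).getD Q) '' Set.Iic n := by
    rintro c' ⟨m, hm⟩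
    refine ⟨m, ?_, by show (tmSteps step m Q).getD Q = c'; rw [hm]; rfl⟩
    by_contra hlt
    simp only [Set.mem_Iic, not_le] at hlt
    obtain ⟨k, rfl⟩ := Nat.exists_eq_add_of_lt hlt
    rw [show n + k + 1 = n + (k + 1) from by omega, tmSteps_add, hn] at hm
    simp only [Option.bind_some, tmSteps] at hm
    rw [hnone] at hm
    simp at hm
  exact ((Set.finite_Iic n).image _).subset hsub
end
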